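/- arXiv:1701.08323 — 3 statements merged into one kernel-verified Lean document; each statement's English description precedes it below -/
import Mathlib

section
/- For any 0 < s < t and any points x_1, ..., x_N in the torus ℝ/ℤ, (1/N²) Σ_{m,n=1}^N θ_s(x_n - x_m) ≥ (1/N²) Σ_{m,n=1}^N θ_t(x_n - x_m), i.e. the double sum of Jacobi theta functions over pairs of points is monotonically decreasing in t. -/
open Real Filter Finset

noncomputable def jacobiTheta' (t x : ℝ) : ℝ :=
  1 + 2 * ∑' k : ℕ, Real.exp (-4 * π ^ 2 * ((k : ℝ) + 1) ^ 2 * t) *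
    Real.cos (2 * π * ((k : ℝ) + 1) * x)

lemma summable_aux (t : ℝ) (ht : 0 < t) (x : ℝ) :
    Summable (fun k : ℕ => Real.exp (-4 * π ^ 2 * ((k : ℝ) + 1) ^ 2 * t) *
      Real.cos (2 * π * ((k : ℝ) + 1) * x)) := by
  have hr : Real.exp (-4 * π ^ 2 * t) < 1 := by
    rw [Real.exp_lt_one_iff]
    have : (0:ℝ) < 4 * π ^ 2 * t := by positivity
    linarith
  have hgeo : Summable (fun k : ℕ => Real.exp (-4 * π ^ 2 * t) ^ (k + 1)) := by
    have h := (summable_geometric_of_lt_one (Real.exp_nonneg _) hr).mul_left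
      (Real.exp (-4 * π ^ 2 * t))
    exact h.congr (fun k => by rw [pow_succ]; ring)
  apply Summable.of_abs
  apply Summable.of_nonneg_of_le (fun k => abs_nonneg _) _ hgeo
  intro k
  have hk : (0:ℝ) ≤ (k:ℝ) := Nat.cast_nonneg k
  have hexp : -4 * π ^ 2 * ((k : ℝ) + 1) ^ 2 * t ≤ (-4 * π ^ 2 * t) * ((k:ℝ)+1) := by
    have h4 : (0:ℝ) ≤ 4 * π ^ 2 * t * (((k:ℝ)+1) * k) := by positivity
    nlinarith [h4]
  calc |Real.exp (-4 * π ^ 2 * ((k : ℝ) + 1) ^ 2 * t) * Real.cos (2 * π * ((k : ℝ) + 1) * x)|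
      = Real.exp (-4 * π ^ 2 * ((k : ℝ) + 1) ^ 2 * t) * |Real.cos (2 * π * ((k : ℝ) + 1) * x)| := by
        rw [abs_mul, abs_of_pos (Real.exp_pos _)]
    _ ≤ Real.exp (-4 * π ^ 2 * ((k : ℝ) + 1) ^ 2 * t) * 1 := by
        exact mul_le_mul_of_nonneg_left (Real.abs_cos_le_one _) (Real.exp_pos _).le
    _ = Real.exp (-4 * π ^ 2 * ((k : ℝ) + 1) ^ 2 * t) := mul_one _
    _ ≤ Real.exp ((-4 * π ^ 2 * t) * ((k:ℝ)+1)) := Real.exp_le_exp.2 hexp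
    _ = Real.exp (-4 * π ^ 2 * t) ^ (k + 1) := by
        rw [← Real.exp_nat_mul]
        congr 1
        push_cast
        ring

lemma double_cos_nonneg {N : ℕ} (a : Fin N → ℝ) :
    0 ≤ ∑ m : Fin N, ∑ n : Fin N, Real.cos (a n - a m) := by
  have h : ∑ m : Fin N, ∑ n : Fin N, Real.cos (a n - a m) =
      (∑ n : Fin N, Real.cos (a n)) ^ 2 + (∑ n : Fin N, Real.sin (a n)) ^ 2 := by
    simp_rw [Real.cos_sub, Finset.sum_add_distrib, ← Finset.sum_mul, ← Finset.mul_sum]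
    ring
  rw [h]
  positivity

theorem stmt_1 (s t : ℝ) (hs : 0 < s) (hst : s < t) (N : ℕ) (x : Fin N → ℝ) :
    (1 / (N : ℝ) ^ 2) * ∑ m : Fin N, ∑ n : Fin N, jacobiTheta' s (x n - x m) ≥
      (1 / (N : ℝ) ^ 2) * ∑ m : Fin N, ∑ n : Fin N, jacobiTheta' t (x n - x m) := by
  have ht : 0 < t := hs.trans hst
  have key : ∀ u : ℝ, 0 < u → ∑ m : Fin N, ∑ n : Fin N, jacobiTheta' u (x n - x m) =
      (N:ℝ) * N + 2 * ∑' k : ℕ, Real.exp (-4 * π ^ 2 * ((k : ℝ) + 1) ^ 2 * u) *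
        ∑ m : Fin N, ∑ n : Fin N, Real.cos (2 * π * ((k : ℝ) + 1) * (x n - x m)) := by
    intro u hu
    have hswap : ∑ m : Fin N, ∑ n : Fin N, (∑' k : ℕ,
        Real.exp (-4 * π ^ 2 * ((k : ℝ) + 1) ^ 2 * u) *
          Real.cos (2 * π * ((k : ℝ) + 1) * (x n - x m))) =
        ∑' k : ℕ, ∑ m : Fin N, ∑ n : Fin N,
          Real.exp (-4 * π ^ 2 * ((k : ℝ) + 1) ^ 2 * u) *
            Real.cos (2 * π * ((k : ℝ) + 1) * (x n - x m)) := by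
      rw [Summable.tsum_finsetSum (fun m _ => summable_sum (fun n _ => summable_aux u hu _))]
      exact Finset.sum_congr rfl (fun m _ =>
        (Summable.tsum_finsetSum (fun n _ => summable_aux u hu _)).symm)
    simp only [jacobiTheta']
    simp only [Finset.sum_add_distrib, Finset.sum_const, Finset.card_univ, Fintype.card_fin,
      nsmul_eq_mul, mul_one, ← Finset.mul_sum]
    rw [hswap]
    congr 2
    exact tsum_congr (fun k => by simp_rw [Finset.mul_sum])
  rw [ge_iff_le, key s hs, key t ht]
  have hnn : ∀ k : ℕ, 0 ≤ ∑ m : Fin N, ∑ n : Fin N,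
      Real.cos (2 * π * ((k : ℝ) + 1) * (x n - x m)) := by
    intro k
    have heq : ∀ m n : Fin N, 2 * π * ((k : ℝ) + 1) * (x n - x m) =
        (2 * π * ((k : ℝ) + 1) * x n) - (2 * π * ((k : ℝ) + 1) * x m) := fun m n => by ring
    simp_rw [heq]
    exact double_cos_nonneg (fun n => 2 * π * ((k : ℝ) + 1) * x n)
  have hsummable : ∀ u : ℝ, 0 < u → Summable (fun k : ℕ =>
      Real.exp (-4 * π ^ 2 * ((k : ℝ) + 1) ^ 2 * u) *
        ∑ m : Fin N, ∑ n : Fin N, Real.cos (2 * π * ((k : ℝ) + 1) * (x n - x m))) := by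
    intro u hu
    have h : Summable (fun k : ℕ => ∑ m : Fin N, ∑ n : Fin N,
        Real.exp (-4 * π ^ 2 * ((k : ℝ) + 1) ^ 2 * u) *
          Real.cos (2 * π * ((k : ℝ) + 1) * (x n - x m))) :=
      summable_sum (fun m _ => summable_sum (fun n _ => summable_aux u hu _))
    exact h.congr (fun k => by simp_rw [← Finset.mul_sum])
  have hterm : ∀ k : ℕ,
      Real.exp (-4 * π ^ 2 * ((k : ℝ) + 1) ^ 2 * t) *
        (∑ m : Fin N, ∑ n : Fin N, Real.cos (2 * π * ((k : ℝ) + 1) * (x n - x m))) ≤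
      Real.exp (-4 * π ^ 2 * ((k : ℝ) + 1) ^ 2 * s) *
        (∑ m : Fin N, ∑ n : Fin N, Real.cos (2 * π * ((k : ℝ) + 1) * (x n - x m))) := by
    intro k
    have hc : (0:ℝ) < 4 * π ^ 2 * ((k:ℝ) + 1) ^ 2 := by positivity
    have hle : -4 * π ^ 2 * ((k : ℝ) + 1) ^ 2 * t ≤ -4 * π ^ 2 * ((k : ℝ) + 1) ^ 2 * s := by
      nlinarith [hc, hst]
    exact mul_le_mul_of_nonneg_right (Real.exp_le_exp.2 hle) (hnn k)
  have hts := Summable.tsum_le_tsum hterm (hsummable t ht) (hsummable s hs)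
  have hN : (0:ℝ) ≤ 1 / (N:ℝ) ^ 2 := by positivity
  apply mul_le_mul_of_nonneg_left _ hN
  linarith
end

section
/- A sequence (x_n) in ℝ/ℤ is uniformly distributed (equidistributed mod 1) if and only if lim_{N→∞} (1/N²) Σ_{m,n=1}^N θ_1(x_n - x_m) = 1, where θ_1 is the Jacobi theta function at time t = 1. -/
open Real Filter Finset

/-- Uniform distribution mod 1 in the sense of Weyl's criterion. -/
def WeylUD (x : ℕ → ℝ) : Prop :=
  ∀ ℓ : ℤ, ℓ ≠ 0 →
    Tendsto (fun N : ℕ => (1 / (N : ℂ)) * ∑ n ∈ Finset.range N,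
      Complex.exp (2 * (π : ℂ) * Complex.I * (ℓ : ℂ) * (x n : ℂ))) atTop (nhds 0)


noncomputable def E (x : ℕ → ℝ) (c : ℝ) (N : ℕ) : ℂ :=
  ∑ n ∈ Finset.range N, Complex.exp (2 * (π : ℂ) * Complex.I * (c : ℂ) * (x n : ℂ))

lemma E_eq (x : ℕ → ℝ) (c : ℝ) (N : ℕ) :
    E x c N = ((∑ n ∈ Finset.range N, Real.cos (2*π*c*x n) : ℝ) : ℂ)
      + ((∑ n ∈ Finset.range N, Real.sin (2*π*c*x n) : ℝ) : ℂ) * Complex.I := by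
  unfold E
  have h : ∀ n, Complex.exp (2 * (π : ℂ) * Complex.I * (c : ℂ) * (x n : ℂ))
      = ((Real.cos (2*π*c*x n) : ℝ) : ℂ) + ((Real.sin (2*π*c*x n) : ℝ) : ℂ) * Complex.I := by
    intro n
    rw [show (2 * (π : ℂ) * Complex.I * (c : ℂ) * (x n : ℂ)) = ((2*π*c*x n : ℝ) : ℂ) * Complex.I by
      push_cast; ring]
    rw [Complex.exp_mul_I]
    push_cast
    rfl
  simp_rw [h, Finset.sum_add_distrib, ← Finset.sum_mul]
  push_cast
  ring

lemma norm_E_sq (x : ℕ → ℝ) (c : ℝ) (N : ℕ) :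
    ‖E x c N‖^2 = (∑ n ∈ Finset.range N, Real.cos (2*π*c*x n))^2
      + (∑ n ∈ Finset.range N, Real.sin (2*π*c*x n))^2 := by
  rw [E_eq, ← Complex.normSq_eq_norm_sq]
  · exact Complex.normSq_add_mul_I _ _

lemma cos_double_sum (x : ℕ → ℝ) (c : ℝ) (N : ℕ) :
    ∑ m ∈ Finset.range N, ∑ n ∈ Finset.range N, Real.cos (2*π*c*(x n - x m))
      = ‖E x c N‖^2 := by
  rw [norm_E_sq]
  have h : ∀ m n, Real.cos (2*π*c*(x n - x m))
      = Real.cos (2*π*c*x n) * Real.cos (2*π*c*x m)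
        + Real.sin (2*π*c*x n) * Real.sin (2*π*c*x m) := by
    intro m n
    rw [show 2*π*c*(x n - x m) = 2*π*c*x n - 2*π*c*x m by ring, Real.cos_sub]
  simp_rw [h]
  rw [sq, sq, Finset.sum_mul_sum, Finset.sum_mul_sum, ← Finset.sum_add_distrib]
  simp_rw [← Finset.sum_add_distrib]
  exact Finset.sum_congr rfl fun m _ => Finset.sum_congr rfl fun n _ => by ring

lemma summable_c : Summable (fun k : ℕ => Real.exp (-4*π^2*((k:ℝ)+1)^2)) := by
  have hlt : Real.exp (-1) < 1 := by
    rw [Real.exp_lt_one_iff]; norm_num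
  have h1 : Summable (fun k : ℕ => Real.exp (-1) ^ (k+1)) :=
    ((summable_geometric_of_lt_one (Real.exp_pos _).le hlt).mul_left
      (Real.exp (-1))).congr (fun k => by rw [pow_succ]; ring)
  refine Summable.of_nonneg_of_le (fun k => (Real.exp_pos _).le) (fun k => ?_) h1
  rw [← Real.exp_nat_mul]
  apply Real.exp_le_exp.2
  push_cast
  have hπ : (1:ℝ) ≤ π := by linarith [Real.pi_gt_three]
  have hk : (1:ℝ) ≤ (k:ℝ)+1 := by linarith [Nat.cast_nonneg (α := ℝ) k]
  have hπ2 : (1:ℝ) ≤ π^2 := by nlinarith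
  have hk2 : (k:ℝ)+1 ≤ ((k:ℝ)+1)^2 := by nlinarith
  nlinarith [mul_le_mul_of_nonneg_right hπ2 (sq_nonneg ((k:ℝ)+1))]

lemma summable_term (y : ℝ) :
    Summable (fun k : ℕ => Real.exp (-4*π^2*((k:ℝ)+1)^2) *
      Real.cos (2*π*((k:ℝ)+1)*y)) := by
  refine Summable.of_norm_bounded summable_c (fun k => ?_)
  rw [norm_mul, Real.norm_eq_abs, Real.norm_eq_abs, abs_of_pos (Real.exp_pos _)]
  calc Real.exp (-4*π^2*((k:ℝ)+1)^2) * |Real.cos (2*π*((k:ℝ)+1)*y)|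
      ≤ Real.exp (-4*π^2*((k:ℝ)+1)^2) * 1 :=
        mul_le_mul_of_nonneg_left (Real.abs_cos_le_one _) (Real.exp_pos _).le
    _ = _ := mul_one _

lemma theta_eq (y : ℝ) : jacobiTheta' 1 y
    = 1 + 2 * ∑' k : ℕ, Real.exp (-4*π^2*((k:ℝ)+1)^2) * Real.cos (2*π*((k:ℝ)+1)*y) := by
  simp only [jacobiTheta', mul_one]

lemma key (x : ℕ → ℝ) (N : ℕ) :
    ∑ m ∈ Finset.range N, ∑ n ∈ Finset.range N, jacobiTheta' 1 (x n - x m)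
      = (N:ℝ)^2 + 2 * ∑' k : ℕ, Real.exp (-4*π^2*((k:ℝ)+1)^2) * ‖E x ((k:ℝ)+1) N‖^2 := by
  simp_rw [theta_eq]

  have swap1 : ∀ m, ∑ n ∈ Finset.range N, ∑' k : ℕ,
      Real.exp (-4*π^2*((k:ℝ)+1)^2) * Real.cos (2*π*((k:ℝ)+1)*(x n - x m))
      = ∑' k : ℕ, ∑ n ∈ Finset.range N,
        Real.exp (-4*π^2*((k:ℝ)+1)^2) * Real.cos (2*π*((k:ℝ)+1)*(x n - x m)) :=
    fun m => (Summable.tsum_finsetSum (fun n _ => summable_term _)).symm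
  have swap2 : ∑ m ∈ Finset.range N, ∑' k : ℕ, ∑ n ∈ Finset.range N,
      Real.exp (-4*π^2*((k:ℝ)+1)^2) * Real.cos (2*π*((k:ℝ)+1)*(x n - x m))
      = ∑' k : ℕ, ∑ m ∈ Finset.range N, ∑ n ∈ Finset.range N,
        Real.exp (-4*π^2*((k:ℝ)+1)^2) * Real.cos (2*π*((k:ℝ)+1)*(x n - x m)) :=
    (Summable.tsum_finsetSum (fun m _ => summable_sum (fun n _ => summable_term _))).symm
  simp_rw [Finset.sum_add_distrib, ← Finset.mul_sum, swap1]
  rw [swap2]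
  have hQ : ∀ k : ℕ, ∑ m ∈ Finset.range N, ∑ n ∈ Finset.range N,
      Real.exp (-4*π^2*((k:ℝ)+1)^2) * Real.cos (2*π*((k:ℝ)+1)*(x n - x m))
      = Real.exp (-4*π^2*((k:ℝ)+1)^2) * ‖E x ((k:ℝ)+1) N‖^2 := by
    intro k
    simp_rw [← Finset.mul_sum]
    rw [cos_double_sum]
  simp_rw [hQ]
  simp [Finset.sum_const, sq]

lemma norm_E_le (x : ℕ → ℝ) (c : ℝ) (N : ℕ) : ‖E x c N‖ ≤ N := by
  unfold E
  refine le_trans (norm_sum_le _ _) ?_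
  have h : ∀ n, ‖Complex.exp (2 * (π : ℂ) * Complex.I * (c : ℂ) * (x n : ℂ))‖ = 1 := by
    intro n
    rw [Complex.norm_exp]
    have : (2 * (π : ℂ) * Complex.I * (c : ℂ) * (x n : ℂ)).re = 0 := by
      simp [Complex.mul_re, Complex.mul_im]
    rw [this, Real.exp_zero]
  simp [h]

lemma norm_div_sq (z : ℂ) (N : ℕ) : ‖(1 / (N : ℂ)) * z‖^2 = ‖z‖^2 / (N:ℝ)^2 := by
  rw [norm_mul, mul_pow, norm_div, norm_one, Complex.norm_natCast]
  rw [div_pow, one_pow, div_mul_eq_mul_div, one_mul]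

lemma E_sq_div_le_one (x : ℕ → ℝ) (c : ℝ) (N : ℕ) : ‖E x c N‖^2 / (N:ℝ)^2 ≤ 1 := by
  rcases Nat.eq_zero_or_pos N with rfl | hN
  · simp [E]
  · rw [div_le_one (by positivity)]
    have := norm_E_le x c N
    nlinarith [norm_nonneg (E x c N)]

lemma summable_g (x : ℕ → ℝ) (N : ℕ) :
    Summable (fun k : ℕ => Real.exp (-4*π^2*((k:ℝ)+1)^2) * ‖E x ((k:ℝ)+1) N‖^2 / (N:ℝ)^2) := by
  refine Summable.of_nonneg_of_le (fun k => by positivity) (fun k => ?_) summable_c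
  rw [mul_div_assoc]
  exact mul_le_of_le_one_right (Real.exp_pos _).le (E_sq_div_le_one x _ N)

lemma identity (x : ℕ → ℝ) (N : ℕ) (hN : 1 ≤ N) :
    (1 / (N : ℝ) ^ 2) * ∑ m ∈ Finset.range N, ∑ n ∈ Finset.range N, jacobiTheta' 1 (x n - x m)
      = 1 + 2 * ∑' k : ℕ, Real.exp (-4*π^2*((k:ℝ)+1)^2) * ‖E x ((k:ℝ)+1) N‖^2 / (N:ℝ)^2 := by
  have hN0 : (N:ℝ) ≠ 0 := Nat.cast_ne_zero.2 (by omega)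
  rw [key, tsum_div_const, mul_add]
  rw [one_div, inv_mul_cancel₀ (by positivity)]
  ring

lemma weyl_norm_eq (x : ℕ → ℝ) (ℓ : ℤ) (N : ℕ) :
    ‖∑ n ∈ Finset.range N, Complex.exp (2 * (π : ℂ) * Complex.I * (ℓ : ℂ) * (x n : ℂ))‖
      = ‖E x (ℓ.natAbs : ℝ) N‖ := by
  rcases le_or_gt 0 ℓ with h | h
  · have hc : (ℓ : ℂ) = (((ℓ.natAbs : ℝ) : ℂ)) := by
      rw [Nat.cast_natAbs, abs_of_nonneg h]
      norm_cast
    rw [E]; congr 1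
    exact Finset.sum_congr rfl fun n _ => by rw [hc]
  · have hc : (ℓ : ℂ) = -(((ℓ.natAbs : ℝ) : ℂ)) := by
      rw [Nat.cast_natAbs, abs_of_neg h]
      push_cast
      ring
    have hterm : ∀ n, Complex.exp (2 * (π : ℂ) * Complex.I * (ℓ : ℂ) * (x n : ℂ))
        = (starRingEnd ℂ) (Complex.exp (2 * (π : ℂ) * Complex.I * ((ℓ.natAbs : ℝ) : ℂ) * (x n : ℂ))) := by
      intro n
      rw [← Complex.exp_conj]
      congr 1
      simp only [map_mul, Complex.conj_I, Complex.conj_ofReal, map_ofNat]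
      rw [hc]
      ring
    rw [show (∑ n ∈ Finset.range N, Complex.exp (2 * (π : ℂ) * Complex.I * (ℓ : ℂ) * (x n : ℂ)))
        = (starRingEnd ℂ) (E x (ℓ.natAbs : ℝ) N) by
      rw [E, map_sum]; exact Finset.sum_congr rfl fun n _ => hterm n]
    exact RCLike.norm_conj _

theorem stmt_3 (x : ℕ → ℝ) :
    WeylUD x ↔
      Tendsto (fun N : ℕ => (1 / (N : ℝ) ^ 2) *
        ∑ m ∈ Finset.range N, ∑ n ∈ Finset.range N, jacobiTheta' 1 (x n - x m))
        atTop (nhds 1) := by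
  set g : ℕ → ℕ → ℝ := fun N k =>
    Real.exp (-4*π^2*((k:ℝ)+1)^2) * ‖E x ((k:ℝ)+1) N‖^2 / (N:ℝ)^2 with hg_def
  have heq : ∀ᶠ N : ℕ in atTop, (1 / (N : ℝ) ^ 2) *
      ∑ m ∈ Finset.range N, ∑ n ∈ Finset.range N, jacobiTheta' 1 (x n - x m)
      = 1 + 2 * ∑' k : ℕ, g N k := by
    filter_upwards [eventually_ge_atTop 1] with N hN using identity x N hN
  constructor
  · intro h
    have hk : ∀ k : ℕ, Tendsto (fun N => g N k) atTop (nhds 0) := by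
      intro k
      have hℓ : ((k : ℤ) + 1) ≠ 0 := by omega
      have h1 := h ((k : ℤ) + 1) hℓ
      have h2 : Tendsto (fun N : ℕ => ‖(1 / (N : ℂ)) * E x ((k:ℝ)+1) N‖) atTop (nhds 0) := by
        have h3 := tendsto_zero_iff_norm_tendsto_zero.mp h1
        refine h3.congr fun N => ?_
        rw [norm_mul, norm_mul]
        congr 1
        have hna : ((k : ℤ) + 1).natAbs = k + 1 := by omega
        have := weyl_norm_eq x ((k : ℤ) + 1) N
        rw [hna] at this
        rw [this]
        norm_num
      have h4 : Tendsto (fun N : ℕ => Real.exp (-4*π^2*((k:ℝ)+1)^2) *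
          ‖(1 / (N : ℂ)) * E x ((k:ℝ)+1) N‖^2) atTop (nhds 0) := by
        have := (h2.pow 2).const_mul (Real.exp (-4*π^2*((k:ℝ)+1)^2))
        simpa using this
      refine h4.congr fun N => ?_
      simp only [hg_def]
      rw [norm_div_sq, mul_div_assoc]
    have hbound : ∀ N : ℕ, ∀ k : ℕ, ‖g N k‖ ≤ Real.exp (-4*π^2*((k:ℝ)+1)^2) := by
      intro N k
      simp only [hg_def]
      rw [Real.norm_eq_abs, abs_of_nonneg (by positivity), mul_div_assoc]
      exact mul_le_of_le_one_right (Real.exp_pos _).le (E_sq_div_le_one x _ N)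
    have htsum : Tendsto (fun N => ∑' k : ℕ, g N k) atTop (nhds 0) := by
      have := tendsto_tsum_of_dominated_convergence (f := g) (g := fun _ => (0:ℝ))
        summable_c hk (Filter.Eventually.of_forall hbound)
      simpa using this
    have hfin : Tendsto (fun N : ℕ => 1 + 2 * ∑' k : ℕ, g N k) atTop (nhds 1) := by
      have := tendsto_const_nhds.add (htsum.const_mul 2) (f := fun _ : ℕ => (1:ℝ))
      simpa using this
    exact hfin.congr' (heq.mono fun N hN => hN.symm)
  · intro hF
    have htsum : Tendsto (fun N => ∑' k : ℕ, g N k) atTop (nhds 0) := by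
      have h1 : Tendsto (fun N : ℕ => ((1 / (N : ℝ) ^ 2) *
          (∑ m ∈ Finset.range N, ∑ n ∈ Finset.range N, jacobiTheta' 1 (x n - x m)) - 1) / 2)
          atTop (nhds 0) := by
        have := (hF.sub (tendsto_const_nhds (x := (1:ℝ)))).div_const 2
        simpa using this
      refine h1.congr' ?_
      filter_upwards [heq] with N hN
      rw [hN]; ring
    intro ℓ hℓ
    set k : ℕ := ℓ.natAbs - 1 with hk_def
    have hna : ℓ.natAbs = k + 1 := by omega
    have hg : Tendsto (fun N => g N k) atTop (nhds 0) := by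
      refine squeeze_zero (fun N => by positivity) (fun N => ?_) htsum
      exact Summable.le_tsum (summable_g x N) k (fun j _ => by positivity)
    have hq : Tendsto (fun N => ‖E x ((k:ℝ)+1) N‖^2 / (N:ℝ)^2) atTop (nhds 0) := by
      have h2 := hg.const_mul (Real.exp (-4*π^2*((k:ℝ)+1)^2))⁻¹
      simp only [mul_zero] at h2
      refine h2.congr fun N => ?_
      simp only [hg_def]
      field_simp
    have hq' : Tendsto (fun N : ℕ => ‖(1 / (N : ℂ)) * E x ((k:ℝ)+1) N‖) atTop (nhds 0) := by
      have h3 := (Real.continuous_sqrt.continuousAt (x := (0:ℝ))).tendsto.comp hq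
      rw [Real.sqrt_zero] at h3
      refine h3.congr fun N => ?_
      show Real.sqrt (‖E x ((k:ℝ)+1) N‖^2 / (N:ℝ)^2) = _
      rw [← norm_div_sq, Real.sqrt_sq (norm_nonneg _)]
    rw [tendsto_zero_iff_norm_tendsto_zero]
    refine hq'.congr fun N => ?_
    rw [norm_mul, norm_mul]
    congr 1
    have := weyl_norm_eq x ℓ N
    rw [hna] at this
    rw [this]
    norm_num
end

section
/- For any points x_1, ..., x_N ∈ 𝕋 and any t > 0, the identity ‖(1/N) Σ_{m=1}^N θ_{t/2}(· - x_m) - 1‖²_{L²(𝕋)} = (1/N²) Σ_{m,n=1}^N θ_t(x_n - x_m) - 1 holds, where θ_t is the Jacobi theta function. -/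
open Real Filter Finset

namespace Stmt10Aux

open MeasureTheory intervalIntegral

noncomputable def A (s : ℝ) (k : ℕ) : ℝ := Real.exp (-4 * π ^ 2 * ((k : ℝ) + 1) ^ 2 * s)

lemma A_pos (s : ℝ) (k : ℕ) : 0 < A s k := Real.exp_pos _

lemma summable_A {s : ℝ} (hs : 0 < s) : Summable (A s) := by
  have hπ : (0:ℝ) < 4 * π ^ 2 * s := by positivity
  have hr1 : Real.exp (-(4 * π ^ 2 * s)) < 1 := Real.exp_lt_one_iff.mpr (by linarith)
  have hgeom : Summable fun k : ℕ => Real.exp (-(4 * π ^ 2 * s)) ^ (k + 1) := by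
    have := (summable_geometric_of_lt_one (Real.exp_nonneg _) hr1).mul_left
      (Real.exp (-(4 * π ^ 2 * s)))
    simpa [pow_succ, mul_comm, pow_mul] using this
  refine Summable.of_nonneg_of_le (fun k => (A_pos s k).le) (fun k => ?_) hgeom
  rw [← Real.exp_nat_mul]
  apply Real.exp_le_exp.mpr
  have hk : ((k:ℝ) + 1) ≤ ((k:ℝ) + 1) ^ 2 := by nlinarith [Nat.cast_nonneg (α := ℝ) k]
  have : ((k:ℝ) + 1) * (4 * π ^ 2 * s) ≤ ((k:ℝ) + 1) ^ 2 * (4 * π ^ 2 * s) := by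
    apply mul_le_mul_of_nonneg_right hk hπ.le
  push_cast
  nlinarith

lemma A_sq (s : ℝ) (k : ℕ) : A s k * A s k = A (2 * s) k := by
  unfold A; rw [← Real.exp_add]; ring_nf

lemma J (n : ℤ) (d : ℝ) :
    ∫ y in (0:ℝ)..1, Real.cos (2 * π * (n:ℝ) * y + d) = if n = 0 then Real.cos d else 0 := by
  rcases eq_or_ne n 0 with h | h
  · simp [h]
  · have hc : (2 * π * (n:ℝ)) ≠ 0 := by
      have : (n:ℝ) ≠ 0 := Int.cast_ne_zero.mpr h
      have := Real.pi_ne_zero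
      positivity
    rw [if_neg h]
    have heq := intervalIntegral.integral_comp_mul_add Real.cos hc d (a := 0) (b := 1)
    rw [heq, integral_cos]
    have hsin : Real.sin (2 * π * (n:ℝ) + d) = Real.sin d := by
      rw [show (2 * π * (n:ℝ) + d) = d + n * (2 * π) by ring]
      exact Real.sin_add_int_mul_two_pi d n
    rw [show 2 * π * (n:ℝ) * 1 + d = 2 * π * (n:ℝ) + d by ring,
      show 2 * π * (n:ℝ) * 0 + d = d by ring, hsin, sub_self, smul_zero]

lemma ortho (k l : ℕ) (α β : ℝ) :
    ∫ y in (0:ℝ)..1,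
      Real.cos (2 * π * ((k:ℝ) + 1) * y + α) * Real.cos (2 * π * ((l:ℝ) + 1) * y + β)
      = if k = l then Real.cos (α - β) / 2 else 0 := by
  have key : ∀ y : ℝ,
      Real.cos (2 * π * ((k:ℝ) + 1) * y + α) * Real.cos (2 * π * ((l:ℝ) + 1) * y + β)
      = (Real.cos (2 * π * (((k:ℤ) + l + 2 : ℤ):ℝ) * y + (α + β))
         + Real.cos (2 * π * (((k:ℤ) - l : ℤ):ℝ) * y + (α - β))) / 2 := by
    intro y
    have hcc : ∀ A B : ℝ, Real.cos A * Real.cos B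
        = (Real.cos (A + B) + Real.cos (A - B)) / 2 := by
      intro A B; rw [Real.cos_add, Real.cos_sub]; ring
    rw [hcc]
    push_cast
    rw [show (2 * π * ((k:ℝ) + 1) * y + α) + (2 * π * ((l:ℝ) + 1) * y + β)
        = 2 * π * ((k:ℝ) + (l:ℝ) + 2) * y + (α + β) by ring,
      show (2 * π * ((k:ℝ) + 1) * y + α) - (2 * π * ((l:ℝ) + 1) * y + β)
        = 2 * π * ((k:ℝ) - (l:ℝ)) * y + (α - β) by ring]
  simp_rw [key]
  rw [intervalIntegral.integral_div]
  rw [intervalIntegral.integral_add (Continuous.intervalIntegrable (by continuity) _ _)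
    (Continuous.intervalIntegrable (by continuity) _ _)]
  rw [J ((k:ℤ) + l + 2) (α + β), J ((k:ℤ) - l) (α - β)]
  have h1 : ((k:ℤ) + l + 2) ≠ 0 := by positivity
  rw [if_neg h1]
  rcases eq_or_ne k l with h | h
  · simp [h]
  · have : ((k:ℤ) - l) ≠ 0 := sub_ne_zero.mpr (by exact_mod_cast h)
    simp [h, this]

noncomputable def Fc (s a : ℝ) (y : ℝ) : ℝ :=
  ∑' k : ℕ, A s k * Real.cos (2 * π * ((k:ℝ) + 1) * (y - a))

lemma norm_term_le (s a : ℝ) (k : ℕ) (y : ℝ) :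
    ‖A s k * Real.cos (2 * π * ((k:ℝ) + 1) * (y - a))‖ ≤ A s k := by
  rw [Real.norm_eq_abs, abs_mul, abs_of_pos (A_pos s k)]
  exact mul_le_of_le_one_right (A_pos s k).le (Real.abs_cos_le_one _)

lemma continuous_Fc {s : ℝ} (hs : 0 < s) (a : ℝ) : Continuous (Fc s a) :=
  continuous_tsum (fun k => by continuity) (summable_A hs) (fun k y => norm_term_le s a k y)

lemma summable_norm_term {s : ℝ} (hs : 0 < s) (a y : ℝ) :
    Summable fun k : ℕ => ‖A s k * Real.cos (2 * π * ((k:ℝ) + 1) * (y - a))‖ :=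
  Summable.of_nonneg_of_le (fun k => norm_nonneg _) (fun k => norm_term_le s a k y)
    (summable_A hs)

lemma key_integral {s : ℝ} (hs : 0 < s) (a b : ℝ) :
    ∫ y in (0:ℝ)..1, Fc s a y * Fc s b y
      = (1/2) * ∑' k : ℕ, A (2*s) k * Real.cos (2 * π * ((k:ℝ) + 1) * (a - b)) := by
  set f : ℕ × ℕ → ℝ → ℝ := fun p y =>
    (A s p.1 * Real.cos (2 * π * ((p.1:ℝ) + 1) * (y - a))) *
    (A s p.2 * Real.cos (2 * π * ((p.2:ℝ) + 1) * (y - b))) with hf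
  have hpt : ∀ y : ℝ, Fc s a y * Fc s b y = ∑' p : ℕ × ℕ, f p y := fun y =>
    tsum_mul_tsum_of_summable_norm (summable_norm_term hs a y) (summable_norm_term hs b y)
  have hcont : ∀ p : ℕ × ℕ, Continuous (f p) := fun p => by
    simp only [hf]; continuity
  have hInt : ∀ p : ℕ × ℕ, IntegrableOn (f p) (Set.Ioc (0:ℝ) 1) volume := fun p =>
    ((hcont p).integrableOn_Icc (a := 0) (b := 1)).mono_set Set.Ioc_subset_Icc_self
  have hbound : ∀ p : ℕ × ℕ, ∀ y : ℝ, ‖f p y‖ ≤ A s p.1 * A s p.2 := by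
    intro p y
    rw [hf]; simp only []
    rw [norm_mul]
    exact mul_le_mul (norm_term_le s a p.1 y) (norm_term_le s b p.2 y) (norm_nonneg _)
      (A_pos s p.1).le
  have hsumA : Summable fun p : ℕ × ℕ => A s p.1 * A s p.2 := by
    apply summable_mul_of_summable_norm (f := A s) (g := A s) <;>
      simpa [Real.norm_eq_abs, abs_of_pos (A_pos s _)] using summable_A hs
  have hnormint : ∀ p : ℕ × ℕ,
      ∫ y in Set.Ioc (0:ℝ) 1, ‖f p y‖ ≤ A s p.1 * A s p.2 := by
    intro p
    have h1 : ∫ y in Set.Ioc (0:ℝ) 1, ‖f p y‖ ≤ ∫ _ in Set.Ioc (0:ℝ) 1, (A s p.1 * A s p.2) := by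
      apply MeasureTheory.integral_mono (hInt p).norm ((integrableOn_const_iff (C := A s p.1 * A s p.2)).mpr ?_)
        (fun y => hbound p y)
      right; simp [Real.volume_Ioc]
    simpa [Real.volume_Ioc] using h1
  have hsumint : Summable fun p : ℕ × ℕ => ∫ y in Set.Ioc (0:ℝ) 1, ‖f p y‖ :=
    Summable.of_nonneg_of_le
      (fun p => MeasureTheory.integral_nonneg (fun y => norm_nonneg _)) hnormint hsumA
  rw [intervalIntegral.integral_of_le (zero_le_one)]
  simp_rw [hpt]
  rw [← MeasureTheory.integral_tsum_of_summable_integral_norm hInt hsumint]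
  have hterm : ∀ p : ℕ × ℕ, ∫ y in Set.Ioc (0:ℝ) 1, f p y
      = if p.1 = p.2 then (1/2) * (A (2*s) p.1 * Real.cos (2 * π * ((p.1:ℝ) + 1) * (a - b)))
        else 0 := by
    intro p
    have : ∀ y : ℝ, f p y = (A s p.1 * A s p.2) *
        (Real.cos (2 * π * ((p.1:ℝ) + 1) * y + (-(2 * π * ((p.1:ℝ) + 1) * a))) *
         Real.cos (2 * π * ((p.2:ℝ) + 1) * y + (-(2 * π * ((p.2:ℝ) + 1) * b)))) := by
      intro y; rw [hf]
      simp only []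
      rw [show 2 * π * ((p.1:ℝ) + 1) * (y - a)
          = 2 * π * ((p.1:ℝ) + 1) * y + (-(2 * π * ((p.1:ℝ) + 1) * a)) by ring,
        show 2 * π * ((p.2:ℝ) + 1) * (y - b)
          = 2 * π * ((p.2:ℝ) + 1) * y + (-(2 * π * ((p.2:ℝ) + 1) * b)) by ring]
      ring
    simp_rw [this]
    rw [← intervalIntegral.integral_of_le (zero_le_one),
      intervalIntegral.integral_const_mul, ortho]
    rcases eq_or_ne p.1 p.2 with h | h
    · rw [if_pos h, if_pos h, ← h, A_sq]
      have : (-(2 * π * ((p.1:ℝ) + 1) * a)) - (-(2 * π * ((p.1:ℝ) + 1) * b))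
          = -(2 * π * ((p.1:ℝ) + 1) * (a - b)) := by ring
      rw [this, Real.cos_neg]
      ring
    · rw [if_neg h, if_neg h, mul_zero]
  simp_rw [hterm]
  rw [← tsum_mul_left]
  refine (Function.Injective.tsum_eq (g := fun k : ℕ => ((k, k) : ℕ × ℕ)) ?_ ?_).symm.trans ?_
  · intro i j hij; simpa using congrArg Prod.fst hij
  · intro p hp
    rcases p with ⟨i, j⟩
    rcases eq_or_ne i j with h | h
    · exact ⟨i, by simp [h]⟩
    · exact absurd (by simp [Function.mem_support, h] : ((i, j) : ℕ × ℕ) ∉ _) (fun hc => hc hp)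
  · simp

lemma integral_double_sum {N : ℕ} (g : Fin N → ℝ → ℝ) (hg : ∀ m, Continuous (g m)) :
    (∫ y in (0:ℝ)..1, ∑ m : Fin N, ∑ n : Fin N, g m y * g n y)
      = ∑ m : Fin N, ∑ n : Fin N, ∫ y in (0:ℝ)..1, g m y * g n y := by
  have hint : ∀ m n : Fin N, IntervalIntegrable (fun y => g m y * g n y) MeasureTheory.volume 0 1 :=
    fun m n => ((hg m).mul (hg n)).intervalIntegrable _ _
  have hcs : ∀ m : Fin N, Continuous fun y => ∑ n : Fin N, g m y * g n y := fun m =>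
    continuous_finset_sum _ (fun n _ => (hg m).mul (hg n))
  rw [intervalIntegral.integral_finset_sum
    (f := fun (m : Fin N) y => ∑ n : Fin N, g m y * g n y)
    (fun m _ => (hcs m).intervalIntegrable _ _)]
  exact Finset.sum_congr rfl fun m _ =>
    intervalIntegral.integral_finset_sum fun n _ => hint m n

end Stmt10Aux

open Stmt10Aux MeasureTheory in
theorem stmt_10 (N : ℕ) (hN : 0 < N) (x : Fin N → ℝ) (t : ℝ) (ht : 0 < t) :
    (∫ y in (0:ℝ)..1,
        ((1 / (N : ℝ)) * ∑ m : Fin N, jacobiTheta' (t / 2) (y - x m) - 1) ^ 2) =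
      (1 / (N : ℝ) ^ 2) * ∑ m : Fin N, ∑ n : Fin N, jacobiTheta' t (x n - x m) - 1 := by
  have hs : 0 < t / 2 := by linarith
  have hNne : (N:ℝ) ≠ 0 := Nat.cast_ne_zero.mpr hN.ne'
  have hθ : ∀ u y a : ℝ, jacobiTheta' u (y - a) = 1 + 2 * Fc u a y := fun _ _ _ => rfl
  have h1 : ∀ y : ℝ, ((1 / (N : ℝ)) * ∑ m : Fin N, jacobiTheta' (t / 2) (y - x m) - 1) ^ 2
      = (4 / (N:ℝ)^2) * ∑ m : Fin N, ∑ n : Fin N, Fc (t/2) (x m) y * Fc (t/2) (x n) y := by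
    intro y
    simp_rw [hθ]
    rw [Finset.sum_add_distrib, Finset.sum_const, Finset.card_univ, Fintype.card_fin,
      ← Finset.mul_sum, ← Finset.sum_mul_sum]
    field_simp
    ring
  simp_rw [h1]
  rw [intervalIntegral.integral_const_mul]
  have hintF : ∀ m n : Fin N, IntervalIntegrable
      (fun y => Fc (t/2) (x m) y * Fc (t/2) (x n) y) volume 0 1 := fun m n =>
    (((continuous_Fc hs (x m)).mul (continuous_Fc hs (x n)))).intervalIntegrable _ _
  rw [integral_double_sum (fun m => Fc (t / 2) (x m)) (fun m => continuous_Fc hs (x m))]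
  have hkey : ∀ m n : Fin N, ∫ y in (0:ℝ)..1, Fc (t/2) (x m) y * Fc (t/2) (x n) y
      = 1/2 * ∑' k : ℕ, A t k * Real.cos (2 * π * ((k:ℝ) + 1) * (x n - x m)) := by
    intro m n
    rw [key_integral hs (x m) (x n), show 2 * (t/2) = t by ring]
    congr 1
    apply tsum_congr
    intro k
    rw [show (x m - x n) = -(x n - x m) by ring, mul_neg, Real.cos_neg]
  rw [Finset.sum_congr rfl (fun m _ => Finset.sum_congr rfl (fun n _ => hkey m n))]
  have hθ2 : ∀ m n : Fin N, jacobiTheta' t (x n - x m)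
      = 1 + 2 * ∑' k : ℕ, A t k * Real.cos (2 * π * ((k:ℝ) + 1) * (x n - x m)) := fun _ _ => rfl
  conv_rhs => rw [Finset.sum_congr rfl (fun m _ => Finset.sum_congr rfl
    (fun n _ => hθ2 m n))]
  set G : Fin N → Fin N → ℝ :=
    fun m n => ∑' k : ℕ, A t k * Real.cos (2 * π * ((k:ℝ) + 1) * (x n - x m)) with hG
  have e1 : ∑ m : Fin N, ∑ n : Fin N, (1/2 * G m n)
      = 1/2 * ∑ m : Fin N, ∑ n : Fin N, G m n := by
    simp_rw [← Finset.mul_sum]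
  have e2 : ∑ m : Fin N, ∑ n : Fin N, (1 + 2 * G m n)
      = (N:ℝ)^2 + 2 * ∑ m : Fin N, ∑ n : Fin N, G m n := by
    simp_rw [Finset.sum_add_distrib, Finset.sum_const, Finset.card_univ, Fintype.card_fin,
      nsmul_eq_mul, mul_one, ← Finset.mul_sum]
    push_cast
    ring
  rw [e1, e2]
  field_simp
  ring
end
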